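/- Let d be a digit with 2 ≤ d ≤ 9. Then for every natural number n, the n-th descendant of the one-digit string [d] has the same number of digits as the n-th descendant of the one-digit string [0]: (say^[n]([d])).length = (say^[n]([0])).length. In particular, the stuttering look and say sequences with seeds d ∈ {2, …, 9} grow at the same rate as the sequence with seed 0. -/

import Mathlib

/-- Replace a maximal run `d^n` (given as a nonempty constant list) by `n^n d`:
the base-`b` digits of `n` (most significant first), concatenated `n` times,
followed by the single digit `d`. -/
def sayRun {b : ℕ} : List (Fin b) → List (Fin b)
  | [] => []
  | d :: t =>
      (List.replicate (t.length + 1)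
        ((Nat.digits b (t.length + 1)).reverse.map
          (fun k => (⟨k % b, Nat.mod_lt k d.pos⟩ : Fin b)))).flatten ++ [d]

/-- The stuttering say-what-you-see operation: decompose a string into its
maximal runs and replace each run `d^n` by `n^n d`. -/
def say {b : ℕ} (S : List (Fin b)) : List (Fin b) :=
  ((S.splitBy (· == ·)).map sayRun).flatten

private theorem mySplitByLoop_eq_append {α : Type*} {r : α → α → Bool} {l : List α} {a : α}
    {g : List α} (gs : List (List α)) :
    List.splitBy.loop r l a g gs = gs.reverse ++ List.splitBy.loop r l a g [] := by
  induction l generalizing a g gs with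
  | nil => simp [List.splitBy.loop]
  | cons b l IH =>
    simp_rw [List.splitBy.loop]
    split <;> rw [IH]
    conv_rhs => rw [IH]
    simp

private theorem mySplitByLoop_concat {α : Type*} {r : α → α → Bool} {l : List α} {x a : α}
    {g : List α} (h : r ((a :: l).getLast (by simp)) x = false) :
    List.splitBy.loop r (l ++ [x]) a g [] = List.splitBy.loop r l a g [] ++ [[x]] := by
  induction l generalizing a g with
  | nil =>
    simp only [List.getLast_singleton] at h
    simp [List.splitBy.loop, h, mySplitByLoop_eq_append]
  | cons b l IH =>
    rw [List.cons_append, List.splitBy.loop, List.splitBy.loop]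
    have hl : r ((b :: l).getLast (by simp)) x = false := by
      rwa [List.getLast_cons (by simp)] at h
    split
    · exact IH hl
    · rw [mySplitByLoop_eq_append, IH hl, mySplitByLoop_eq_append ((a :: g).reverse :: [])]
      simp

theorem splitBy_concat_of_getLast {α : Type*} {r : α → α → Bool} {M : List α} {x : α}
    (h : M = [] ∨ ∃ y, M.getLast? = some y ∧ r y x = false) :
    (M ++ [x]).splitBy r = M.splitBy r ++ [[x]] := by
  rcases h with rfl | ⟨y, hy, hr⟩
  · rfl
  · rcases M with _ | ⟨a, t⟩
    · simp at hy
    · show List.splitBy.loop r (t ++ [x]) a [] [] = _ ++ [[x]]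
      rw [mySplitByLoop_concat]
      · rfl
      · have : (a :: t).getLast (by simp) = y := by
          have := List.getLast?_eq_getLast (l := a :: t) (by simp)
          rw [this] at hy
          exact Option.some.inj hy
        rwa [this]

theorem say_concat {b : ℕ} {M : List (Fin b)} {x : Fin b}
    (h : M = [] ∨ ∃ y, M.getLast? = some y ∧ y ≠ x) :
    say (M ++ [x]) = say M ++ sayRun [x] := by
  have h' : M = [] ∨ ∃ y, M.getLast? = some y ∧ (y == x) = false := by
    rcases h with rfl | ⟨y, hy, hne⟩
    · exact Or.inl rfl
    · exact Or.inr ⟨y, hy, by simpa using hne⟩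
  unfold say
  rw [splitBy_concat_of_getLast h']
  simp

theorem sayRun_singleton (x : Fin 10) : sayRun [x] = [1, x] := by
  show (List.replicate 1 ((Nat.digits 10 1).reverse.map
          (fun k => (⟨k % 10, Nat.mod_lt k x.pos⟩ : Fin 10)))).flatten ++ [x] = [1, x]
  norm_num [Nat.digits_def']

theorem descendant_of_digit_seed_length (d : Fin 10) (hd2 : 2 ≤ (d : ℕ)) (hd9 : (d : ℕ) ≤ 9)
    (n : ℕ) :
    (say^[n] [d]).length = (say^[n] ([0] : List (Fin 10))).length := by
  have hd0 : d ≠ 0 := by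
    intro h; rw [h] at hd2; simp at hd2
  have hd1 : (1 : Fin 10) ≠ d := by
    intro h; rw [← h] at hd2; simp at hd2
  have key : ∀ n : ℕ, ∃ T : List (Fin 10),
      say^[n] [d] = T ++ [d] ∧ say^[n] ([0] : List (Fin 10)) = T ++ [0] ∧
      (T = [] ∨ T.getLast? = some 1) := by
    intro n
    induction n with
    | zero => exact ⟨[], rfl, rfl, Or.inl rfl⟩
    | succ n IH =>
      obtain ⟨T, hTd, hT0, hTlast⟩ := IH
      have hcond : ∀ x : Fin 10, (1 : Fin 10) ≠ x →
          (T = [] ∨ ∃ y, T.getLast? = some y ∧ y ≠ x) := by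
        intro x hx
        rcases hTlast with rfl | hl
        · exact Or.inl rfl
        · exact Or.inr ⟨1, hl, hx⟩
      refine ⟨say T ++ [1], ?_, ?_, Or.inr ?_⟩
      · rw [Function.iterate_succ_apply', hTd, say_concat (hcond d hd1),
          sayRun_singleton]
        simp
      · rw [Function.iterate_succ_apply', hT0, say_concat (hcond 0 (by decide)),
          sayRun_singleton]
        simp
      · rw [List.getLast?_concat]
  obtain ⟨T, h1, h2, _⟩ := key n
  rw [h1, h2]
  simp
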